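/- arXiv:2006.06909 — 4 statements merged into one kernel-verified Lean document; each statement's English description precedes it below -/
import Mathlib

section
/- Fix K ≥ 1 and M ≥ 0, set N = (M+1)^K, and for a grid point m : Fin K → Fin (M+1) let v(m) = Σ_{l<K} m(l)·(M+1)^l and φ(m) ∈ ℝ^{N+1} with φ(m)_j = max(0, v(m) − (N − 1 − j)). Then the family of vectors (φ(m))_{m}, indexed by all (M+1)^K grid points m, is linearly independent in ℝ^{N+1}. Consequently the span of {φ(m) : m a grid point} has dimension exactly (M+1)^K. -/
/-- The base-(M+1) value of a grid point `m : Fin K → Fin (M+1)`. -/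
def gridVal (K M : ℕ) (m : Fin K → Fin (M + 1)) : ℕ :=
  ∑ l : Fin K, (m l : ℕ) * (M + 1) ^ (l : ℕ)

/-- The ReLU-layer output `φ(m) ∈ ℝ^{N+1}`, `N = (M+1)^K`, with coordinates
`φ(m)_j = max (0, v(m) − (N − 1 − j))`. -/
noncomputable def phi (K M : ℕ) (m : Fin K → Fin (M + 1))
    (j : Fin ((M + 1) ^ K + 1)) : ℝ :=
  max 0 ((gridVal K M m : ℝ) - (((M + 1) ^ K : ℕ) - 1 - (j : ℕ) : ℝ))

/-!
The grid points are enumerated bijectively by their base-`(M+1)` values `t ∈ {0, …, N-1}`, and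
`φ(m)` only depends on `t = v(m)`. Restricted to the coordinates `j = N - s`, `s < N`, the vector
attached to `t` reads `max 0 (t - s + 1)`: a lower unitriangular `N × N` matrix, so these `N`
vectors are linearly independent.
-/

open Matrix

theorem linearIndependent_of_isLowerTriangular {ι κ R : Type*} [Fintype ι] [LinearOrder ι]
    [CommRing R] [IsDomain R] (v : ι → κ → R) (c : ι → κ)
    (h_upper : ∀ i j, i < j → v i (c j) = 0) (h_diag : ∀ i, v i (c i) ≠ 0) :
    LinearIndependent R v := by
  classical
  let A : Matrix ι ι R := Matrix.of fun i j => v i (c j)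
  have hA : A.det ≠ 0 := by
    rw [det_of_isLowerTriangular A fun i j hij => h_upper i j hij]
    exact Finset.prod_ne_zero_iff.mpr fun i _ => h_diag i
  exact (linearIndependent_rows_of_det_ne_zero hA).of_comp (LinearMap.funLeft R R c)

noncomputable def rampVec (N t : ℕ) (j : Fin (N + 1)) : ℝ :=
  max 0 ((t : ℝ) - ((N : ℝ) - 1 - (j : ℕ)))

theorem phi_eq_rampVec (K M : ℕ) (m : Fin K → Fin (M + 1)) :
    phi K M m = rampVec ((M + 1) ^ K) (finFunctionFinEquiv m) := by
  ext j
  simp only [phi, rampVec, gridVal, finFunctionFinEquiv_apply]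

theorem rampVec_apply_rev (N t : ℕ) (s : Fin N) :
    rampVec N t ⟨N - s, by omega⟩ = max 0 ((t : ℝ) - s + 1) := by
  simp only [rampVec, Nat.cast_sub s.isLt.le]
  ring_nf

theorem linearIndependent_rampVec (N : ℕ) :
    LinearIndependent ℝ fun t : Fin N => rampVec N t := by
  refine linearIndependent_of_isLowerTriangular _ (fun s : Fin N => ⟨N - s, by omega⟩) ?_ ?_
  · intro t s hts
    have : (t : ℝ) + 1 ≤ s := by exact_mod_cast hts
    rw [rampVec_apply_rev, max_eq_left (by linarith)]
  · intro t
    simp [rampVec_apply_rev]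

theorem stmt_2_general (K M : ℕ) :
    LinearIndependent ℝ (phi K M) ∧
    Module.finrank ℝ (Submodule.span ℝ (Set.range (phi K M))) = (M + 1) ^ K := by
  have h_indep : LinearIndependent ℝ (phi K M) := by
    have h_comp : phi K M = (fun t : Fin ((M + 1) ^ K) => rampVec _ t) ∘ finFunctionFinEquiv :=
      funext (phi_eq_rampVec K M)
    rw [h_comp]
    exact (linearIndependent_rampVec _).comp _ finFunctionFinEquiv.injective
  refine ⟨h_indep, ?_⟩
  rw [finrank_span_eq_card h_indep]
  simp

theorem stmt_2 (K M : ℕ) (hK : 1 ≤ K) :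
    LinearIndependent ℝ (phi K M) ∧
    Module.finrank ℝ (Submodule.span ℝ (Set.range (phi K M))) = (M + 1) ^ K :=
  stmt_2_general K M
end

section
/- Fix K ≥ 1 and M ≥ 0 and set N = (M+1)^K. For a grid point m : Fin K → Fin (M+1) let v(m) = Σ_{l<K} m(l)·(M+1)^l and φ(m) ∈ ℝ^{N+1} with φ(m)_j = max(0, v(m) − (N − 1 − j)). Define, for each label k ∈ Fin K and grid point m, the block vector Φ(k, m) ∈ (Fin K → ℝ^{N+1}) (equivalently ℝ^{K(N+1)}) whose k-th block equals φ(m) and whose other blocks are zero. Then the family (Φ(k, m))_{(k,m)}, indexed by all K·(M+1)^K pairs (k, m), is linearly independent; hence its span has dimension exactly K(M+1)^K. -/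
/-- The block vector `Φ(k, m)` whose `k`-th block is `φ(m)` and whose other blocks
are zero. -/
noncomputable def Phi (K M : ℕ) (p : Fin K × (Fin K → Fin (M + 1))) :
    Fin K → Fin ((M + 1) ^ K + 1) → ℝ :=
  fun k' => if k' = p.1 then phi K M p.2 else 0

lemma gridVal_eq_equiv (K M : ℕ) (m : Fin K → Fin (M + 1)) :
    gridVal K M m = (finFunctionFinEquiv m : ℕ) := by
  simp [gridVal, finFunctionFinEquiv_apply]

lemma gridVal_lt (K M : ℕ) (m : Fin K → Fin (M + 1)) :
    gridVal K M m < (M + 1) ^ K := by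
  rw [gridVal_eq_equiv]; exact (finFunctionFinEquiv m).2

lemma gridVal_inj {K M : ℕ} {a b : Fin K → Fin (M + 1)}
    (h : gridVal K M a = gridVal K M b) : a = b := by
  rw [gridVal_eq_equiv, gridVal_eq_equiv] at h
  exact finFunctionFinEquiv.injective (Fin.ext h)

lemma relu_key (w v : ℕ) :
    max 0 ((w : ℝ) - v + 1) - 2 * max 0 ((w : ℝ) - v) + max 0 ((w : ℝ) - v - 1)
      = if w = v then 1 else 0 := by
  rcases lt_trichotomy w v with h | h | h
  · have h' : (w : ℝ) + 1 ≤ v := by exact_mod_cast h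
    rw [max_eq_left (by linarith), max_eq_left (by linarith),
      max_eq_left (by linarith), if_neg h.ne]
    ring
  · subst h
    norm_num
  · have h' : (v : ℝ) + 1 ≤ w := by exact_mod_cast h
    rw [max_eq_right (by linarith), max_eq_right (by linarith),
      max_eq_right (by linarith), if_neg h.ne']
    ring

theorem stmt_3 (K M : ℕ) (hK : 1 ≤ K) :
    LinearIndependent ℝ (Phi K M) ∧
    Module.finrank ℝ (Submodule.span ℝ (Set.range (Phi K M))) = K * (M + 1) ^ K := by
  have hli : LinearIndependent ℝ (Phi K M) := by
    rw [Fintype.linearIndependent_iff]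
    intro g hg p0
    obtain ⟨k0, m0⟩ := p0
    have hvN : gridVal K M m0 < (M + 1) ^ K := gridVal_lt K M m0
    -- evaluate the vanishing linear combination at block k0, coordinate j
    have h1 : ∀ j : Fin ((M + 1) ^ K + 1), ∑ m : Fin K → Fin (M + 1),
        g (k0, m) * max 0 ((gridVal K M m : ℝ)
          - ((((M + 1) ^ K : ℕ) : ℝ) - 1 - (j : ℕ))) = 0 := by
      intro j
      have h2 := congrFun (congrFun hg k0) j
      simp only [Finset.sum_apply, Pi.smul_apply, Phi, smul_eq_mul, Pi.zero_apply,
        ite_apply, mul_ite, mul_zero] at h2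
      rw [Fintype.sum_prod_type, Finset.sum_comm] at h2
      simp only [Finset.sum_ite_eq, Finset.mem_univ, if_true, phi] at h2
      exact h2
    set S : ℝ → ℝ := fun t =>
      ∑ m : Fin K → Fin (M + 1), g (k0, m) * max 0 ((gridVal K M m : ℝ) - t) with hS
    -- S vanishes at all relevant shifts
    have hS0 : ∀ u : ℕ, u ≤ (M + 1) ^ K + 1 → S ((u : ℝ) - 1) = 0 := by
      intro u hu
      rcases Nat.lt_or_ge u ((M + 1) ^ K + 1) with h | h
      · have hj : (M + 1) ^ K - u < (M + 1) ^ K + 1 := by omega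
        have h3 := h1 ⟨(M + 1) ^ K - u, hj⟩
        have hc : ((((M + 1) ^ K : ℕ) : ℝ) - 1
            - ((⟨(M + 1) ^ K - u, hj⟩ : Fin ((M + 1) ^ K + 1)) : ℕ)) = (u : ℝ) - 1 := by
          have hcc : (((M + 1) ^ K - u : ℕ) : ℝ) = (((M + 1) ^ K : ℕ) : ℝ) - u := by
            push_cast [Nat.cast_sub (by omega : u ≤ (M + 1) ^ K)]; ring
          simp only [hcc]
          ring
        rw [hc] at h3
        exact h3
      · have hu' : u = (M + 1) ^ K + 1 := by omega
        subst hu'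
        rw [hS]
        apply Finset.sum_eq_zero
        intro m _
        have hw : (gridVal K M m : ℝ) < (((M + 1) ^ K : ℕ) : ℝ) := by
          exact_mod_cast gridVal_lt K M m
        have h4 : max 0 ((gridVal K M m : ℝ) - ((((M + 1) ^ K + 1 : ℕ) : ℝ) - 1)) = 0 := by
          rw [max_eq_left]; push_cast at hw ⊢; linarith
        rw [h4, mul_zero]
    -- the second-difference functional extracts g (k0, m0)
    have key : g (k0, m0) =
        S ((gridVal K M m0 : ℝ) - 1) - 2 * S (gridVal K M m0 : ℝ)
          + S ((gridVal K M m0 : ℝ) + 1) := by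
      simp only [hS]
      rw [Finset.mul_sum, ← Finset.sum_sub_distrib, ← Finset.sum_add_distrib]
      rw [show g (k0, m0) = ∑ m : Fin K → Fin (M + 1),
        (if m = m0 then g (k0, m0) else 0) by simp]
      apply Finset.sum_congr rfl
      intro m _
      have e1 : (gridVal K M m : ℝ) - ((gridVal K M m0 : ℝ) - 1)
          = (gridVal K M m : ℝ) - (gridVal K M m0 : ℝ) + 1 := by ring
      have e3 : (gridVal K M m : ℝ) - ((gridVal K M m0 : ℝ) + 1)
          = (gridVal K M m : ℝ) - (gridVal K M m0 : ℝ) - 1 := by ring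
      rw [e1, e3]
      have hk := relu_key (gridVal K M m) (gridVal K M m0)
      by_cases hm : m = m0
      · subst hm
        rw [if_pos rfl] at hk ⊢
        linear_combination (-(g (k0, m))) * hk
      · have hne : gridVal K M m ≠ gridVal K M m0 := fun h => hm (gridVal_inj h)
        rw [if_neg hm]
        rw [if_neg hne] at hk
        linear_combination (-(g (k0, m))) * hk
    have ea := hS0 (gridVal K M m0) (by omega)
    have eb := hS0 (gridVal K M m0 + 1) (by omega)
    have ec := hS0 (gridVal K M m0 + 2) (by omega)
    rw [show ((gridVal K M m0 + 1 : ℕ) : ℝ) - 1 = (gridVal K M m0 : ℝ) by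
      push_cast; ring] at eb
    rw [show ((gridVal K M m0 + 2 : ℕ) : ℝ) - 1 = (gridVal K M m0 : ℝ) + 1 by
      push_cast; ring] at ec
    rw [key, ea, eb, ec]
    ring
  refine ⟨hli, ?_⟩
  rw [finrank_span_eq_card hli]
  simp [Fintype.card_prod, Fintype.card_fun, mul_comm]
end

section
/- For every K ≥ 1 and M ≥ 0, setting N = (M+1)^K, there exist a weight matrix W : Fin (N+1) → (Fin K → ℝ) and a bias vector b : Fin (N+1) → ℝ such that the family of vectors (ReLU(W·m − b))_{m}, indexed by all grid points m ∈ {0,…,M}^K (embedded in ℝ^K) and defined coordinatewise by j ↦ max(0, Σ_{l<K} W(j)(l)·m(l) − b(j)), is linearly independent in ℝ^{N+1}. Moreover one can take every row of W equal to w = ((M+1)^{K−1}, (M+1)^{K−2}, …, M+1, 1) and b(j) = N − 1 − j. -/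
open Finset

lemma aux_li (N : ℕ) :
    LinearIndependent ℝ
      (fun (s : Fin N) (j : Fin (N + 1)) => max 0 ((s : ℝ) + (j : ℝ) + 1 - N)) := by
  rw [Fintype.linearIndependent_iff]
  intro g hg
  set C : Matrix (Fin N) (Fin N) ℝ :=
    Matrix.of fun s t => max 0 ((t : ℝ) + 1 - (s : ℝ)) with hC
  have hdet : C.det ≠ 0 := by
    have htri : C.BlockTriangular id := by
      intro s t hlt
      simp only [id] at hlt
      simp only [hC, Matrix.of_apply]
      have : (t : ℝ) + 1 - (s : ℝ) ≤ 0 := by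
        have : (t : ℝ) + 1 ≤ (s : ℝ) := by exact_mod_cast hlt
        linarith
      exact max_eq_left this
    rw [Matrix.det_of_upperTriangular htri]
    have hdiag : ∀ s : Fin N, C s s = 1 := by
      intro s
      simp [hC, max_eq_right]
    rw [Finset.prod_congr rfl fun s _ => hdiag s]
    simp
  have hmul : C.mulVec g = 0 := by
    funext s
    have hsN : (s : ℕ) ≤ N := s.isLt.le
    have hj : N - (s : ℕ) < N + 1 := by omega
    have hev := congrFun hg ⟨N - (s : ℕ), hj⟩
    simp only [Finset.sum_apply, Pi.smul_apply, smul_eq_mul, Pi.zero_apply] at hev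
    rw [Matrix.mulVec, Pi.zero_apply]
    rw [← hev]
    apply Finset.sum_congr rfl
    intro t _
    have hcast : ((N - (s : ℕ) : ℕ) : ℝ) = (N : ℝ) - (s : ℝ) := by
      push_cast [Nat.cast_sub hsN]; ring
    simp only [hC, Matrix.of_apply, dotProduct]
    have harg : (t : ℝ) + ((⟨N - (s : ℕ), hj⟩ : Fin (N + 1)) : ℝ) + 1 - (N : ℝ)
        = (t : ℝ) + 1 - (s : ℝ) := by
      simp only [Fin.val_mk]
      rw [hcast]; ring
    rw [harg]
    ring
  intro s
  exact congrFun (Matrix.eq_zero_of_mulVec_eq_zero hdet hmul) s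

theorem stmt_4 (K M : ℕ) (hK : 1 ≤ K) :
    ∃ (W : Fin ((M + 1) ^ K + 1) → Fin K → ℝ) (b : Fin ((M + 1) ^ K + 1) → ℝ),
      (∀ j l, W j l = ((M + 1 : ℕ) : ℝ) ^ (K - 1 - (l : ℕ))) ∧
      (∀ j, b j = (((M + 1) ^ K : ℕ) : ℝ) - 1 - (j : ℕ)) ∧
      LinearIndependent ℝ
        (fun (m : Fin K → Fin (M + 1)) (j : Fin ((M + 1) ^ K + 1)) =>
          max 0 ((∑ l : Fin K, W j l * ((m l : ℕ) : ℝ)) - b j)) := by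
  set N := (M + 1) ^ K with hN
  refine ⟨fun _ l => ((M + 1 : ℕ) : ℝ) ^ (K - 1 - (l : ℕ)),
          fun j => ((N : ℕ) : ℝ) - 1 - (j : ℕ), fun _ _ => rfl, fun _ => rfl, ?_⟩
  set e : (Fin K → Fin (M + 1)) → Fin N :=
    fun m => finFunctionFinEquiv (fun i : Fin K => m i.rev) with he
  have einj : Function.Injective e := by
    intro m₁ m₂ h
    have hfe : (fun i : Fin K => m₁ i.rev) = (fun i : Fin K => m₂ i.rev) :=
      finFunctionFinEquiv.injective h
    funext l
    have := congrFun hfe l.rev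
    simpa using this
  have hval : ∀ m : Fin K → Fin (M + 1),
      ((e m : ℕ) : ℝ) = ∑ l : Fin K, ((M + 1 : ℕ) : ℝ) ^ (K - 1 - (l : ℕ)) * ((m l : ℕ) : ℝ) := by
    intro m
    have h1 : (e m : ℕ) = ∑ i : Fin K, ((m i.rev : ℕ)) * (M + 1) ^ (i : ℕ) :=
      finFunctionFinEquiv_apply _
    have h2 : ∑ i : Fin K, ((m i.rev : ℕ)) * (M + 1) ^ (i : ℕ)
        = ∑ l : Fin K, ((m l : ℕ)) * (M + 1) ^ ((l.rev : ℕ)) := by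
      refine Fintype.sum_equiv Fin.revPerm _ _ (fun i => ?_)
      simp [Fin.rev_rev]
    have h3 : ∀ l : Fin K, (l.rev : ℕ) = K - 1 - (l : ℕ) := by
      intro l
      rw [Fin.val_rev]
      omega
    rw [h1, h2]
    push_cast
    refine Finset.sum_congr rfl (fun l _ => ?_)
    rw [h3 l]
    ring
  have key : (fun (m : Fin K → Fin (M + 1)) (j : Fin (N + 1)) =>
        max 0 ((∑ l : Fin K, ((M + 1 : ℕ) : ℝ) ^ (K - 1 - (l : ℕ)) * ((m l : ℕ) : ℝ))
          - (((N : ℕ) : ℝ) - 1 - (j : ℕ))))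
      = (fun (s : Fin N) (j : Fin (N + 1)) => max 0 ((s : ℝ) + (j : ℝ) + 1 - N)) ∘ e := by
    funext m j
    simp only [Function.comp_apply]
    congr 1
    rw [← hval m]
    ring
  rw [key]
  exact (aux_li N).comp e einj
end

section
/- Let n ≥ 1, let a_1 < a_2 < … < a_n be real numbers, and let t_1, …, t_n be real numbers satisfying t_1 < a_1 and a_i ≤ t_{i+1} < a_{i+1} for all 1 ≤ i ≤ n−1. Then the n vectors u_i ∈ ℝ^n defined by (u_i)_j = max(0, a_i − t_j) for i, j = 1, …, n are linearly independent. -/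
/-!
Order the units by their thresholds. Since `a_i ≤ t_j` whenever `i < j`, the unit with threshold
`t_j` is inactive on `a_i`, so the matrix `(max 0 (a_i - t_j))_{i,j}` is lower triangular; its
diagonal entries `a_i - t_i` are positive, so its determinant is nonzero and its rows are
linearly independent.
-/

theorem Matrix.IsLowerTriangular.linearIndependent_rows {m R : Type*} [Fintype m] [DecidableEq m]
    [LinearOrder m] [CommRing R] [IsDomain R] {M : Matrix m m R} (hM : M.IsLowerTriangular)
    (hdiag : ∀ i, M i i ≠ 0) : LinearIndependent R (fun i ↦ M i) :=
  Matrix.linearIndependent_rows_of_det_ne_zero <| by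
    rw [Matrix.det_of_isLowerTriangular M hM]
    exact Finset.prod_ne_zero_iff.2 fun i _ ↦ hdiag i

theorem linearIndependent_relu_of_interleaved {ι K : Type*} [Fintype ι] [LinearOrder ι]
    [Field K] [LinearOrder K] [IsStrictOrderedRing K] (a t : ι → K)
    (hlt : ∀ i, t i < a i) (hle : ∀ ⦃i j⦄, i < j → a i ≤ t j) :
    LinearIndependent K (fun (i j : ι) ↦ max 0 (a i - t j)) := by
  classical
  let M : Matrix ι ι K := Matrix.of fun i j ↦ max 0 (a i - t j)
  have hM : M.IsLowerTriangular := fun i j hji ↦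
    max_eq_left (sub_nonpos.2 (hle (OrderDual.toDual_lt_toDual.1 hji)))
  exact hM.linearIndependent_rows fun i ↦ (lt_max_of_lt_right (sub_pos.2 (hlt i))).ne'

theorem stmt_5 (n : ℕ) (hn : 1 ≤ n) (a t : Fin n → ℝ)
    (ha : StrictMono a)
    (h0 : t ⟨0, hn⟩ < a ⟨0, hn⟩)
    (ht : ∀ i : Fin n, ∀ h : (i : ℕ) + 1 < n,
      a i ≤ t ⟨(i : ℕ) + 1, h⟩ ∧ t ⟨(i : ℕ) + 1, h⟩ < a ⟨(i : ℕ) + 1, h⟩) :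
    LinearIndependent ℝ (fun (i : Fin n) (j : Fin n) => max 0 (a i - t j)) := by
  refine linearIndependent_relu_of_interleaved a t ?_ ?_
  · rintro ⟨_ | k, hk⟩
    · exact h0
    · exact (ht ⟨k, by omega⟩ hk).2
  · rintro i ⟨_ | k, hk⟩ hij
    · exact absurd (Fin.lt_def.1 hij) (Nat.not_lt_zero _)
    · calc a i ≤ a ⟨k, by omega⟩ := ha.monotone (Fin.le_def.2 (Nat.lt_succ_iff.1 hij))
        _ ≤ t ⟨k + 1, hk⟩ := (ht ⟨k, by omega⟩ hk).1
end
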